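/- arXiv:1607.03677 — 4 statements merged into one kernel-verified Lean document; each statement's English description precedes it below -/
import Mathlib

section
/- In an extensive game with perfect recall, if x and x' are two non-terminal histories belonging to the same information set, then x and x' have the same round, where the round r(x) of a history x is the number of proper prefixes x' of x with P(x') = P(x). -/
/-- If `y ++ [a]` is a prefix of `x` and `P y = P x`, then the "round" of `y`
    is strictly less than the round of `x`. -/
lemma round_aux_le {A ι : Type*} [DecidableEq ι] (P : List A → ι)
    (y x : List A) (a : A) (h : (y ++ [a]) <+: x) (hP : P y = P x) :
    ((Finset.range y.length).filter fun k => P (y.take k) = P y).card + 1 ≤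
    ((Finset.range x.length).filter fun k => P (x.take k) = P x).card := by
  have hyx : y <+: x := (List.prefix_append y [a]).trans h
  have hlen : y.length < x.length := by
    have := h.length_le; simp at this; omega
  have htake : x.take y.length = y := (List.prefix_iff_eq_take.mp hyx).symm
  have hnot : y.length ∉ (Finset.range y.length).filter
      fun k => P (y.take k) = P y := by simp
  rw [← Finset.card_insert_of_notMem hnot]
  apply Finset.card_le_card
  intro k hk
  simp only [Finset.mem_insert, Finset.mem_filter, Finset.mem_range] at hk ⊢
  rcases hk with rfl | ⟨hk1, hk2⟩
  · exact ⟨hlen, by rw [htake]; exact hP⟩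
  · refine ⟨by omega, ?_⟩
    have : x.take k = y.take k := by
      rw [← htake, List.take_take, min_eq_left (by omega)]
    rw [this, hk2, hP]

/-- If `k` is a maximal position with the same player as `x`, then the round of `x`
    is at most the round of `x.take k` plus one. -/
lemma round_aux_ge {A ι : Type*} [DecidableEq ι] (P : List A → ι)
    (x : List A) (k : ℕ) (hk : k < x.length) (hP : P (x.take k) = P x)
    (hmax : ∀ k', k < k' → k' < x.length → P (x.take k') ≠ P x) :
    ((Finset.range x.length).filter fun k' => P (x.take k') = P x).card ≤
    ((Finset.range (x.take k).length).filter
      fun k' => P ((x.take k).take k') = P (x.take k)).card + 1 := by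
  calc ((Finset.range x.length).filter fun k' => P (x.take k') = P x).card
      ≤ (insert k ((Finset.range (x.take k).length).filter
          fun k' => P ((x.take k).take k') = P (x.take k))).card := by
        apply Finset.card_le_card
        intro k' hk'
        simp only [Finset.mem_insert, Finset.mem_filter, Finset.mem_range] at hk' ⊢
        obtain ⟨h1, h2⟩ := hk'
        by_cases hkk : k' = k
        · exact Or.inl hkk
        · have hlt : k' < k := by
            rcases lt_or_gt_of_ne hkk with h | h
            · exact h
            · exact absurd h2 (hmax k' h h1)
          refine Or.inr ⟨by rw [List.length_take]; omega, ?_⟩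
          rw [List.take_take, min_eq_left (by omega), h2, hP]
    _ ≤ _ := Finset.card_insert_le _ _

/-- In an extensive game with perfect recall, two non-terminal histories in the same
    information set have the same round, where the round of a history x is the number
    of proper prefixes x' of x with P(x') = P(x). Histories are modeled as lists of
    actions, `P` is the player function, `info` assigns information sets (two histories
    are in the same information set iff they have the same `info` value, and `info` is
    finer than the player partition). -/
theorem round_coherence {A ι κ : Type*} [DecidableEq ι]
    (X : Set (List A)) (P : List A → ι) (info : List A → κ)
    (hprefclosed : ∀ x y : List A, x <+: y → y ∈ X → x ∈ X)
    (hPinfo : ∀ x y : List A, x ∈ X → y ∈ X → info x = info y → P x = P y)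
    (hPR : ∀ x x' y : List A, ∀ a : A, x ∈ X → x' ∈ X → y ∈ X →
      P x = P x' → (x' ++ [a]) <+: x → info y = info x →
      ∃ y', y' ∈ X ∧ info y' = info x' ∧ (y' ++ [a]) <+: y)
    (rnd : List A → ℕ)
    (hrnd : ∀ x : List A,
      rnd x = ((Finset.range x.length).filter fun k => P (x.take k) = P x).card)
    (x x' : List A) (hx : x ∈ X) (hx' : x' ∈ X) (hinfo : info x = info x') :
    rnd x = rnd x' := by
  suffices H : ∀ n : ℕ, ∀ x x' : List A, x.length ≤ n → x ∈ X → x' ∈ X →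
      info x = info x' → rnd x ≤ rnd x' by
    exact le_antisymm (H x.length x x' le_rfl hx hx' hinfo)
      (H x'.length x' x le_rfl hx' hx hinfo.symm)
  intro n
  induction n with
  | zero =>
    intro x x' hlen _ _ _
    have : x = [] := List.eq_nil_of_length_eq_zero (by omega)
    subst this
    simp [hrnd []]
  | succ n ih =>
    intro x x' hlen hx hx' hinfo
    set S := (Finset.range x.length).filter fun k => P (x.take k) = P x with hS
    by_cases hne : S.Nonempty
    · -- take the maximal element of S
      set k := S.max' hne with hkdef
      have hkS : k ∈ S := S.max'_mem hne
      have hk1 : k < x.length := (Finset.mem_filter.mp hkS).1 |> Finset.mem_range.mp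
      have hk2 : P (x.take k) = P x := (Finset.mem_filter.mp hkS).2
      have hmax : ∀ k', k < k' → k' < x.length → P (x.take k') ≠ P x := by
        intro k' h1 h2 h3
        have : k' ∈ S := Finset.mem_filter.mpr ⟨Finset.mem_range.mpr h2, h3⟩
        have := S.le_max' k' this
        omega
      set p := x.take k with hpdef
      set a := x.get ⟨k, hk1⟩ with hadef
      have hpa : (p ++ [a]) <+: x := by
        have he : p ++ [a] = x.take (k + 1) := by
          rw [hpdef, hadef, ← List.concat_eq_append, List.get_eq_getElem,
            List.take_concat_get]
        rw [he]
        exact List.take_prefix _ _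
      have hpX : p ∈ X := hprefclosed p x ((List.prefix_append p [a]).trans hpa) hx
      have hPxx' : P x = P x' := hPinfo x x' hx hx' hinfo
      obtain ⟨y', hy'X, hy'info, hy'pre⟩ :=
        hPR x p x' a hx hpX hx' hk2.symm hpa hinfo.symm
      -- induction hypothesis: rnd p ≤ rnd y'
      have hplen : p.length ≤ n := by
        rw [hpdef, List.length_take]; omega
      have h1 : rnd p ≤ rnd y' := ih p y' hplen hpX hy'X hy'info.symm
      -- P y' = P x'
      have hPy' : P y' = P x' := by
        have := hPinfo y' p hy'X hpX hy'info
        rw [this, hk2, hPxx']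
      have h2 : rnd y' + 1 ≤ rnd x' := by
        rw [hrnd y', hrnd x']
        exact round_aux_le P y' x' a hy'pre hPy'
      have h3 : rnd x ≤ rnd p + 1 := by
        rw [hrnd x, hrnd p]
        exact round_aux_ge P x k hk1 hk2 hmax
      omega
    · -- S is empty, so rnd x = 0
      rw [hrnd x]
      rw [Finset.not_nonempty_iff_eq_empty] at hne
      rw [← hS, hne]
      simp
end

section
/- Let Γ be a game with payoff functions Π_i bounded by M, and Γ_t its truncation, where w^t is defined as the supremum, over all players and over all pairs of profiles of Γ inducing the same profile on Γ_t, of the difference of their payoffs. If b̃* is an ε-equilibrium in Γ_t, then the strategy profile b* it induces in Γ is an (ε + w^t)-equilibrium in Γ. -/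
/-- If b̃* is an ε-equilibrium of the truncated game Γ_t (whose payoffs are defined
    via the induced profiles in Γ), and any two profiles of Γ inducing the same
    profile on Γ_t have payoffs within w = w^t of each other, then the profile b*
    induced by b̃* in Γ is an (ε + w)-equilibrium of Γ. `res i` is the restriction of
    player i's strategies to the truncated game, `ind i` the induced extension. -/
theorem truncated_eq_induces_eq {N : Type*} [DecidableEq N] {S T : N → Type*}
    (Payoff : (∀ i, S i) → N → ℝ) (M : ℝ) (hM : ∀ b i, |Payoff b i| ≤ M)
    (res : ∀ i, S i → T i) (ind : ∀ i, T i → S i)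
    (hretr : ∀ i x, res i (ind i x) = x)
    (w ε : ℝ)
    (hw : ∀ b1 b2 : ∀ i, S i, (∀ i, res i (b1 i) = res i (b2 i)) →
      ∀ i, |Payoff b1 i - Payoff b2 i| ≤ w)
    (btil : ∀ i, T i)
    (heq : ∀ i (b' : T i),
      Payoff (fun j => ind j (Function.update btil i b' j)) i
        - Payoff (fun j => ind j (btil j)) i ≤ ε) :
    ∀ i (b' : S i),
      Payoff (Function.update (fun j => ind j (btil j)) i b') i
        - Payoff (fun j => ind j (btil j)) i ≤ ε + w := by
  intro i b'
  have key : ∀ j, res j (Function.update (fun j => ind j (btil j)) i b' j)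
      = res j ((fun k => ind k (Function.update btil i (res i b') k)) j) := by
    intro j
    by_cases h : j = i
    · subst h; simp [hretr]
    · simp [Function.update_of_ne h, hretr]
  have h1 := hw _ _ key i
  have h2 := heq i (res i b')
  have := abs_le.mp h1
  linarith [this.1, this.2]
end

section
/- With the same setting, if b* is an ε-equilibrium in Γ, then the strategy profile b̃* it induces on the truncated game Γ_t is an (ε + 2w^t)-equilibrium in Γ_t. -/
/-- If b* is an ε-equilibrium of Γ, then the profile b̃* it induces on the truncated
    game Γ_t (whose payoffs are defined via induced profiles in Γ) is an
    (ε + 2w)-equilibrium of Γ_t, where any two profiles of Γ inducing the same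
    profile on Γ_t have payoffs within w = w^t of each other. -/
theorem eq_induces_truncated_eq {N : Type*} [DecidableEq N] {S T : N → Type*}
    (Payoff : (∀ i, S i) → N → ℝ) (M : ℝ) (hM : ∀ b i, |Payoff b i| ≤ M)
    (res : ∀ i, S i → T i) (ind : ∀ i, T i → S i)
    (hretr : ∀ i x, res i (ind i x) = x)
    (w ε : ℝ)
    (hw : ∀ b1 b2 : ∀ i, S i, (∀ i, res i (b1 i) = res i (b2 i)) →
      ∀ i, |Payoff b1 i - Payoff b2 i| ≤ w)
    (bstar : ∀ i, S i)
    (heq : ∀ i (b' : S i),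
      Payoff (Function.update bstar i b') i - Payoff bstar i ≤ ε) :
    ∀ i (b' : T i),
      Payoff (fun j => ind j (Function.update (fun j' => res j' (bstar j')) i b' j)) i
        - Payoff (fun j => ind j (res j (bstar j))) i ≤ ε + 2 * w := by
  intro i b'
  set c : ∀ j, S j := fun j => ind j (Function.update (fun j' => res j' (bstar j')) i b' j)
  set btil : ∀ j, S j := fun j => ind j (res j (bstar j))
  set d : ∀ j, S j := Function.update bstar i (ind i b')
  have h1 : |Payoff c i - Payoff d i| ≤ w := by
    apply hw
    intro j
    by_cases h : j = i
    · subst h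
      simp [c, d, hretr]
    · simp [c, d, hretr, Function.update_of_ne h]
  have h2 : |Payoff btil i - Payoff bstar i| ≤ w := by
    apply hw
    intro j
    simp [btil, hretr]
  have h3 : Payoff d i - Payoff bstar i ≤ ε := heq i (ind i b')
  have h1' := abs_le.mp h1
  have h2' := abs_le.mp h2
  linarith [h1'.1, h1'.2, h2'.1, h2'.2]
end

section
/- In a well-rounded extensive game (round function nondecreasing under the prefix relation), for every non-terminal history x, every player has played at most r(x)+1 times along the prefixes of x. -/
/-- In a well-rounded extensive game (round function nondecreasing under the prefix
    relation), for every history x, every player j has played at most r(x)+1 times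
    along the proper prefixes of x, where r(x) is the number of proper prefixes of x
    whose player is P(x), and the proper prefixes of a list x are the lists
    `x.take k` for k < x.length. -/
theorem well_rounded_play_bound {A ι : Type*} [DecidableEq ι]
    (X : Set (List A)) (P : List A → ι)
    (hprefclosed : ∀ x y : List A, x <+: y → y ∈ X → x ∈ X)
    (rnd : List A → ℕ)
    (hrnd : ∀ x : List A,
      rnd x = ((Finset.range x.length).filter fun k => P (x.take k) = P x).card)
    (hwell : ∀ x y : List A, x ∈ X → y ∈ X → x <+: y → rnd x ≤ rnd y)
    (x : List A) (hx : x ∈ X) (j : ι) :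
    ((Finset.range x.length).filter fun k => P (x.take k) = j).card ≤ rnd x + 1 := by
  set S := (Finset.range x.length).filter fun k => P (x.take k) = j with hS
  rcases S.eq_empty_or_nonempty with h | h
  · simp [h]
  · set m := S.max' h with hm
    have hmS : m ∈ S := S.max'_mem h
    have hmlt : m < x.length := by
      have := (Finset.mem_filter.mp hmS).1
      simpa using this
    have hPm : P (x.take m) = j := (Finset.mem_filter.mp hmS).2
    have hlen : (x.take m).length = m := by
      simp [List.length_take, Nat.min_eq_left hmlt.le]
    have hsub : S.erase m ⊆
        (Finset.range (x.take m).length).filter fun k => P ((x.take m).take k) = P (x.take m) := by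
      intro k hk
      rw [Finset.mem_erase] at hk
      obtain ⟨hne, hkS⟩ := hk
      have hklt : k < m := lt_of_le_of_ne (S.le_max' k hkS) hne
      have hPk : P (x.take k) = j := (Finset.mem_filter.mp hkS).2
      refine Finset.mem_filter.mpr ⟨by simpa [hlen] using hklt, ?_⟩
      rw [List.take_take, Nat.min_eq_left hklt.le, hPk, hPm]
    have hmem : x.take m ∈ X := hprefclosed _ _ (List.take_prefix m x) hx
    have hle : rnd (x.take m) ≤ rnd x := hwell _ _ hmem hx (List.take_prefix m x)
    have h1 : (S.erase m).card ≤ rnd (x.take m) := by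
      rw [hrnd (x.take m)]
      exact Finset.card_le_card hsub
    have h2 : S.card ≤ (S.erase m).card + 1 := by
      rw [Finset.card_erase_of_mem hmS]
      omega
    omega
end
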